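/- The path metric δ(x,y) = inf over paths x = x_0 ∼ x_1 ∼ … ∼ x_n = y of Σ_{i=0}^{n-1} (max(Deg(x_i), Deg(x_{i+1})))^{-1/2} is an intrinsic metric, i.e. Σ_y μ_{xy} δ(x,y)² ≤ m(x) for all x ∈ V. -/
import Mathlib


open scoped BigOperators

/-- The weighted vertex degree `Deg(x) = (1/m x) ∑_y μ x y`. -/
noncomputable def deg {V : Type*} (m : V → ℝ) (μ : V → V → ℝ) (x : V) : ℝ :=
  (1 / m x) * ∑' y, μ x y

/-- The path (pseudo)metric
`δ(x,y) = inf over paths of ∑ (max(Deg x_i, Deg x_{i+1}))^{-1/2}`. -/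
noncomputable def pathDist {V : Type*} (m : V → ℝ) (μ : V → V → ℝ) (x y : V) : ℝ :=
  sInf {s : ℝ | ∃ (n : ℕ) (c : ℕ → V), c 0 = x ∧ c n = y ∧
    (∀ i < n, 0 < μ (c i) (c (i + 1))) ∧
    s = ∑ i ∈ Finset.range n, (max (deg m μ (c i)) (deg m μ (c (i + 1)))) ^ (-(1 / 2 : ℝ))}

/-- The natural path metric is an intrinsic metric: `∑_y μ x y δ(x,y)² ≤ m x` for all `x`. -/
theorem stmt4 {V : Type*} (m : V → ℝ) (μ : V → V → ℝ)
    (hm : ∀ x, 0 < m x) (hsym : ∀ x y, μ x y = μ y x)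
    (hnn : ∀ x y, 0 ≤ μ x y) (hlf : ∀ x, (Function.support (μ x)).Finite)
    (hdeg : ∀ x, 0 < deg m μ x)
    (hconn : ∀ x y : V, ∃ (n : ℕ) (c : ℕ → V), c 0 = x ∧ c n = y ∧
      ∀ i < n, 0 < μ (c i) (c (i + 1))) :
    ∀ x, ∑' y, μ x y * pathDist m μ x y ^ 2 ≤ m x := by
  intro x
  classical
  set S : Finset V := (hlf x).toFinset with hS
  have hmemS : ∀ y, μ x y ≠ 0 → y ∈ S := by
    intro y hy
    simp [hS, Set.Finite.mem_toFinset, Function.mem_support, hy]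
  -- pathDist nonneg and bounded
  have hsetnn : ∀ a b : V, ∀ s ∈ {s : ℝ | ∃ (n : ℕ) (c : ℕ → V), c 0 = a ∧ c n = b ∧
      (∀ i < n, 0 < μ (c i) (c (i + 1))) ∧
      s = ∑ i ∈ Finset.range n, (max (deg m μ (c i)) (deg m μ (c (i + 1)))) ^ (-(1 / 2 : ℝ))},
      0 ≤ s := by
    rintro a b s ⟨n, c, _, _, _, rfl⟩
    apply Finset.sum_nonneg
    intro i _
    exact Real.rpow_nonneg (le_trans (hdeg (c i)).le (le_max_left _ _)) _
  have hpd_nonneg : ∀ a b : V, 0 ≤ pathDist m μ a b := by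
    intro a b
    apply Real.sInf_nonneg
    exact hsetnn a b
  have hpd_le : ∀ y, 0 < μ x y →
      pathDist m μ x y ≤ (max (deg m μ x) (deg m μ y)) ^ (-(1 / 2 : ℝ)) := by
    intro y hy
    apply csInf_le ⟨0, fun s hs => hsetnn x y s hs⟩
    refine ⟨1, fun i => if i = 0 then x else y, by simp, by simp, ?_, by simp⟩
    intro i hi
    interval_cases i
    simpa using hy
  -- pointwise bound
  have hpoint : ∀ y, μ x y * pathDist m μ x y ^ 2 ≤ μ x y * (deg m μ x)⁻¹ := by
    intro y
    rcases eq_or_lt_of_le (hnn x y) with h | h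
    · simp [← h]
    · apply mul_le_mul_of_nonneg_left _ (hnn x y)
      have hM : 0 < max (deg m μ x) (deg m μ y) := lt_of_lt_of_le (hdeg x) (le_max_left _ _)
      have h1 : pathDist m μ x y ^ 2 ≤ ((max (deg m μ x) (deg m μ y)) ^ (-(1 / 2 : ℝ))) ^ 2 :=
        pow_le_pow_left₀ (hpd_nonneg x y) (hpd_le y h) 2
      have h2 : ((max (deg m μ x) (deg m μ y)) ^ (-(1 / 2 : ℝ))) ^ 2
          = (max (deg m μ x) (deg m μ y))⁻¹ := by
        rw [← Real.rpow_natCast ((max (deg m μ x) (deg m μ y)) ^ (-(1 / 2 : ℝ))) 2,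
          ← Real.rpow_mul hM.le]
        norm_num [Real.rpow_neg_one]
      have h3 : (max (deg m μ x) (deg m μ y))⁻¹ ≤ (deg m μ x)⁻¹ :=
        inv_anti₀ (hdeg x) (le_max_left _ _)
      calc pathDist m μ x y ^ 2 ≤ _ := h1
        _ = _ := h2
        _ ≤ _ := h3
  -- tsum equals finite sum
  have hzero : ∀ y ∉ S, μ x y * pathDist m μ x y ^ 2 = 0 := by
    intro y hy
    have : μ x y = 0 := by by_contra h; exact hy (hmemS y h)
    simp [this]
  have htsum : ∑' y, μ x y * pathDist m μ x y ^ 2 = ∑ y ∈ S, μ x y * pathDist m μ x y ^ 2 :=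
    tsum_eq_sum hzero
  have hμsum : ∑' y, μ x y = ∑ y ∈ S, μ x y :=
    tsum_eq_sum (fun y hy => by by_contra h; exact hy (hmemS y h))
  have hdegx : ∑ y ∈ S, μ x y = m x * deg m μ x := by
    rw [← hμsum, deg, one_div, ← mul_assoc, mul_inv_cancel₀ (hm x).ne', one_mul]
  rw [htsum]
  calc ∑ y ∈ S, μ x y * pathDist m μ x y ^ 2
      ≤ ∑ y ∈ S, μ x y * (deg m μ x)⁻¹ := Finset.sum_le_sum (fun y _ => hpoint y)
    _ = (∑ y ∈ S, μ x y) * (deg m μ x)⁻¹ := by rw [Finset.sum_mul]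
    _ = m x * deg m μ x * (deg m μ x)⁻¹ := by rw [hdegx]
    _ = m x := mul_inv_cancel_right₀ (hdeg x).ne' (m x)
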